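/- arXiv:1609.01928 — 8 statements merged into one kernel-verified Lean document; each statement's English description precedes it below -/
import Mathlib

section
/- Let m be an odd number not divisible by g-1 and let x_t be the largest extreme cycle point in a non-trivial extreme cycle for the digit set {0,m}. Then x_t is divisible by g. -/
/-- A cycle for the digit set `{0, m}` with scale `g`: integers `x i`, digits `l i ∈ {0, m}`,
satisfying `x (i+1) = (x i + l i) / g` cyclically. -/
def IsCycle (g m : ℕ) (r : ℕ) (x l : ZMod r → ℤ) : Prop :=
  0 < r ∧ (∀ i, l i = 0 ∨ l i = (m : ℤ)) ∧ (∀ i, (g : ℤ) * x (i + 1) = x i + l i)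

/-- A non-trivial extreme cycle: a cycle whose digits are not all zero. -/
def IsNontrivialCycle (g m : ℕ) (r : ℕ) (x l : ZMod r → ℤ) : Prop :=
  IsCycle g m r x l ∧ ∃ i, l i ≠ 0

/-- `m` is incomplete if there exists a non-trivial extreme cycle for `{0, m}`. -/
def Incomplete (g m : ℕ) : Prop :=
  ∃ (r : ℕ) (x l : ZMod r → ℤ), IsNontrivialCycle g m r x l

/-- `m` is complete if the only extreme cycle for `{0, m}` is the trivial one. -/
def Complete (g m : ℕ) : Prop := ¬ Incomplete g m

/-- `m` is primitive if it is incomplete and all proper divisors of `m` are complete. -/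
def Primitive (g m : ℕ) : Prop :=
  Incomplete g m ∧ ∀ d : ℕ, d ∣ m → d ≠ m → Complete g d

/-!
Let `x t` be the largest point. If its digit were `m`, then `g x_{t+1} = x_t + m ≤ g x_t` and
`g x_t = x_{t-1} + l_{t-1} ≤ x_t + m`, so `(g - 1) x_t = m`, contradicting `g - 1 ∤ m`.
Hence the digit at `x_t` is `0`, and `x_t = g x_{t+1}`.
-/

namespace IsCycle

variable {g m r : ℕ} {x l : ZMod r → ℤ}

theorem dvd_of_digit_eq_zero (h : IsCycle g m r x l) {t : ZMod r} (ht : l t = 0) :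
    (g : ℤ) ∣ x t :=
  ⟨x (t + 1), by rw [h.2.2 t, ht, add_zero]⟩

theorem sub_one_mul_eq_of_forall_le (h : IsCycle g m r x l) {t : ZMod r}
    (hmax : ∀ i, x i ≤ x t) (ht : l t = m) : ((g : ℤ) - 1) * x t = m := by
  obtain ⟨-, hdigit, hrec⟩ := h
  apply le_antisymm
  · have hprev : (g : ℤ) * x t = x (t - 1) + l (t - 1) := by simpa using hrec (t - 1)
    have hdigit_le : l (t - 1) ≤ m := by
      rcases hdigit (t - 1) with h | h <;> simp [h]
    linarith [hmax (t - 1)]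
  · have hnext := hrec t
    have hnext_le := mul_le_mul_of_nonneg_left (hmax (t + 1)) (Int.natCast_nonneg g)
    linarith

end IsCycle

theorem stmt2_general (g m r : ℕ) (hg4 : 4 ≤ g)
    (hnd : ¬ (g - 1) ∣ m)
    (x l : ZMod r → ℤ) (h : IsNontrivialCycle g m r x l)
    (t : ZMod r) (hmax : ∀ i, x i ≤ x t) :
    (g : ℤ) ∣ x t := by
  obtain ⟨hcycle, -⟩ := h
  rcases hcycle.2.1 t with ht | ht
  · exact hcycle.dvd_of_digit_eq_zero ht
  · refine absurd ?_ hnd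
    have heq : ((g - 1 : ℕ) : ℤ) * x t = m := by
      rw [Nat.cast_sub (by omega), Nat.cast_one]
      exact hcycle.sub_one_mul_eq_of_forall_le hmax ht
    exact Int.natCast_dvd_natCast.mp ⟨x t, heq.symm⟩

theorem stmt2 (g m r : ℕ) (hg4 : 4 ≤ g) (hge : Even g) (hm : Odd m)
    (hnd : ¬ (g - 1) ∣ m)
    (x l : ZMod r → ℤ) (h : IsNontrivialCycle g m r x l)
    (t : ZMod r) (hmax : ∀ i, x i ≤ x t) :
    (g : ℤ) ∣ x t :=
  stmt2_general g m r hg4 hnd x l h t hmax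
end

section
/- If m is incomplete (i.e., there exists a non-trivial extreme cycle for the digit set {0,m}), then for every odd k ≥ 1, the number km is also incomplete. -/
theorem IsCycle.mul_left {g m r : ℕ} {x l : ZMod r → ℤ} (h : IsCycle g m r x l) (c : ℕ) :
    IsCycle g (c * m) r (fun i => c * x i) (fun i => c * l i) := by
  obtain ⟨hr, hl, hx⟩ := h
  refine ⟨hr, fun i => ?_, fun i => ?_⟩
  · rcases hl i with h0 | hm
    · exact Or.inl (by simp only [h0, mul_zero])
    · exact Or.inr (by simp only [hm, Nat.cast_mul])
  · simp only [mul_left_comm (g : ℤ), hx i, mul_add]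

theorem IsNontrivialCycle.mul_left {g m r : ℕ} {x l : ZMod r → ℤ}
    (h : IsNontrivialCycle g m r x l) {c : ℕ} (hc : c ≠ 0) :
    IsNontrivialCycle g (c * m) r (fun i => c * x i) (fun i => c * l i) := by
  obtain ⟨hcyc, i, hi⟩ := h
  exact ⟨hcyc.mul_left c, i, mul_ne_zero (Int.natCast_ne_zero.mpr hc) hi⟩

theorem Incomplete.mul_left {g m : ℕ} (h : Incomplete g m) {c : ℕ} (hc : c ≠ 0) :
    Incomplete g (c * m) := by
  obtain ⟨r, x, l, hxl⟩ := h
  exact ⟨r, _, _, hxl.mul_left hc⟩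

theorem stmt4_general (g m : ℕ)
    (h : Incomplete g m) (k : ℕ) (hk1 : 1 ≤ k) :
    Incomplete g (k * m) :=
  h.mul_left (Nat.one_le_iff_ne_zero.mp hk1)

theorem stmt4 (g m : ℕ) (hg4 : 4 ≤ g) (hge : Even g) (hm : Odd m)
    (h : Incomplete g m) (k : ℕ) (hk : Odd k) (hk1 : 1 ≤ k) :
    Incomplete g (k * m) :=
  stmt4_general g m h k hk1
end

section
/- Every odd number m with 1 ≤ m ≤ g-2 is complete, i.e., the only extreme cycle for the digit set {0,m} is the trivial cycle {0}. -/
/-! At a minimum `x i` of a cycle the recursion gives `g * x i ≥ x i`, and at a maximum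
`g * x i ≤ x i + m`. So every point of a cycle lies in `[0, m / (g - 1)]`, and for `m < g - 1`
the only integer there is `0`, which forces all digits to vanish. -/

namespace IsCycle

variable {g m r : ℕ} {x l : ZMod r → ℤ}

theorem digit_nonneg (h : IsCycle g m r x l) (i : ZMod r) : 0 ≤ l i := by
  rcases h.2.1 i with hi | hi <;> simp [hi]

theorem digit_le (h : IsCycle g m r x l) (i : ZMod r) : l i ≤ m := by
  rcases h.2.1 i with hi | hi <;> simp [hi]

theorem mul_eq_pred (h : IsCycle g m r x l) (i : ZMod r) :
    (g : ℤ) * x i = x (i - 1) + l (i - 1) := by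
  simpa using h.2.2 (i - 1)

theorem nonneg (hg : 2 ≤ g) (h : IsCycle g m r x l) (i : ZMod r) : 0 ≤ x i := by
  have : NeZero r := ⟨h.1.ne'⟩
  obtain ⟨i₀, hmin⟩ := Finite.exists_min x
  have hg' : (2 : ℤ) ≤ g := by exact_mod_cast hg
  have : 0 ≤ x i₀ := by
    nlinarith [h.mul_eq_pred i₀, hmin (i₀ - 1), h.digit_nonneg (i₀ - 1)]
  exact this.trans (hmin i)

theorem sub_one_mul_le (hg : 1 ≤ g) (h : IsCycle g m r x l) (i : ZMod r) :
    ((g : ℤ) - 1) * x i ≤ m := by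
  have : NeZero r := ⟨h.1.ne'⟩
  obtain ⟨i₀, hmax⟩ := Finite.exists_max x
  have hg' : (1 : ℤ) ≤ g := by exact_mod_cast hg
  calc ((g : ℤ) - 1) * x i ≤ ((g : ℤ) - 1) * x i₀ :=
        mul_le_mul_of_nonneg_left (hmax i) (by linarith)
    _ ≤ m := by linarith [h.mul_eq_pred i₀, hmax (i₀ - 1), h.digit_le (i₀ - 1)]

theorem eq_zero (hmg : m + 2 ≤ g) (h : IsCycle g m r x l) (i : ZMod r) : x i = 0 := by
  have hmg' : (m : ℤ) + 2 ≤ g := by exact_mod_cast hmg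
  have hlow := h.nonneg (by omega) i
  have hup := h.sub_one_mul_le (by omega) i
  nlinarith

theorem digit_eq_zero (hmg : m + 2 ≤ g) (h : IsCycle g m r x l) (i : ZMod r) : l i = 0 := by
  simpa [h.eq_zero hmg] using (h.2.2 i).symm

end IsCycle

theorem complete_of_add_two_le {g m : ℕ} (hmg : m + 2 ≤ g) : Complete g m :=
  fun ⟨_, _, _, h, i, hi⟩ => hi (h.digit_eq_zero hmg i)

theorem stmt5_general (g m : ℕ) (hg4 : 4 ≤ g) (h2 : m ≤ g - 2) :
    Complete g m :=
  complete_of_add_two_le (by omega)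

theorem stmt5 (g m : ℕ) (hg4 : 4 ≤ g) (hge : Even g) (hm : Odd m)
    (h1 : 1 ≤ m) (h2 : m ≤ g - 2) :
    Complete g m :=
  stmt5_general g m hg4 h2
end

section
/- Let x_0 be a cycle point for {0,m} (i.e., x_0 = (g^{r-1} l_{r-1} + ... + g l_1 + l_0)/(g^r-1) for some digits l_i ∈ {0,m}), and suppose x_0 is an integer. Then all points in the cycle generated by x_0 are integers, i.e., x_0 is an extreme cycle point. -/
/-! The point `x₀` of a cycle with digits `l` is `S 0 / (g ^ r - 1)`, where
`S j = ∑ k < r, g ^ k * l (j + k)` is the digit sum read from position `j`. Shifting the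
start gives `g * S (j + 1) = S j + (g ^ r - 1) * l j`; since `g ^ r - 1` is coprime to `g`,
divisibility of `S 0` by `g ^ r - 1` propagates around the cycle, and `x j = S j / (g ^ r - 1)`
is an integer cycle through `x₀`. -/

section CycleSum

variable {R : Type*} [CommRing R] {r : ℕ}

def cycleSum (g : R) (l : ZMod r → R) (j : ZMod r) : R :=
  ∑ k ∈ Finset.range r, g ^ k * l (j + k)

theorem mul_cycleSum_add_one (g : R) (l : ZMod r → R) (j : ZMod r) :
    g * cycleSum g l (j + 1) = cycleSum g l j + (g ^ r - 1) * l j := by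
  set f : ℕ → R := fun k => g ^ k * l (j + k)
  have hshift : g * cycleSum g l (j + 1) = ∑ k ∈ Finset.range r, f (k + 1) := by
    rw [cycleSum, Finset.mul_sum]
    refine Finset.sum_congr rfl fun k _ => ?_
    simp only [f, Nat.cast_succ, pow_succ, add_assoc, add_comm (1 : ZMod r)]
    ring
  have hwrap : f r = g ^ r * l j := by simp [f]
  have hstart : f 0 = l j := by simp [f]
  have hsplit := (Finset.sum_range_succ f r).symm.trans (Finset.sum_range_succ' f r)
  rw [hshift, cycleSum]
  linear_combination hsplit.symm + hwrap - hstart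

theorem isCoprime_pow_sub_one_self (g : R) (hr : 0 < r) : IsCoprime (g ^ r - 1) g :=
  ⟨-1, g ^ (r - 1), by rw [← pow_succ, Nat.sub_add_cancel hr]; ring⟩

theorem dvd_cycleSum_of_dvd_cycleSum_zero [NeZero r] {g : R} {l : ZMod r → R}
    (h0 : g ^ r - 1 ∣ cycleSum g l 0) (j : ZMod r) : g ^ r - 1 ∣ cycleSum g l j := by
  have hstep (n : ℕ) : g ^ r - 1 ∣ cycleSum g l n := by
    induction n with
    | zero => simpa using h0
    | succ n ih =>
      refine (isCoprime_pow_sub_one_self g (NeZero.pos r)).dvd_of_dvd_mul_left ?_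
      rw [Nat.cast_succ, mul_cycleSum_add_one]
      exact dvd_add ih (dvd_mul_right _ _)
  simpa using hstep j.val

end CycleSum

theorem exists_cycle_of_mul_eq_cycleSum {r : ℕ} [NeZero r] {g : ℤ} (hg : g ^ r ≠ 1)
    (l : ZMod r → ℤ) {x0 : ℤ} (hx0 : (g ^ r - 1) * x0 = cycleSum g l 0) :
    ∃ x : ZMod r → ℤ, x 0 = x0 ∧ ∀ i, g * x (i + 1) = x i + l i := by
  have hG : g ^ r - 1 ≠ 0 := sub_ne_zero.mpr hg
  have hdiv (j : ZMod r) : (g ^ r - 1) * (cycleSum g l j / (g ^ r - 1)) = cycleSum g l j :=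
    Int.mul_ediv_cancel' (dvd_cycleSum_of_dvd_cycleSum_zero ⟨x0, hx0.symm⟩ j)
  refine ⟨fun j => cycleSum g l j / (g ^ r - 1), ?_, fun i => ?_⟩
  · exact mul_left_cancel₀ hG ((hdiv 0).trans hx0.symm)
  · refine mul_left_cancel₀ hG ?_
    rw [mul_left_comm, hdiv, mul_cycleSum_add_one, mul_add, hdiv]

theorem stmt6_general (g r : ℕ) (hg4 : 4 ≤ g) (hr : 0 < r)
    (l : ZMod r → ℤ)
    (x0 : ℤ)
    (hx0 : ((g : ℤ) ^ r - 1) * x0 = ∑ k ∈ Finset.range r, (g : ℤ) ^ k * l (k : ZMod r)) :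
    ∃ x : ZMod r → ℤ, x 0 = x0 ∧ ∀ i, (g : ℤ) * x (i + 1) = x i + l i := by
  have : NeZero r := ⟨hr.ne'⟩
  have hg : (g : ℤ) ^ r ≠ 1 := (one_lt_pow₀ (by omega) hr.ne').ne'
  exact exists_cycle_of_mul_eq_cycleSum hg l (by simpa [cycleSum] using hx0)

theorem stmt6 (g m r : ℕ) (hg4 : 4 ≤ g) (hge : Even g) (hm : Odd m) (hr : 0 < r)
    (l : ZMod r → ℤ) (hl : ∀ i, l i = 0 ∨ l i = (m : ℤ))
    (x0 : ℤ)
    (hx0 : ((g : ℤ) ^ r - 1) * x0 = ∑ k ∈ Finset.range r, (g : ℤ) ^ k * l (k : ZMod r)) :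
    ∃ x : ZMod r → ℤ, x 0 = x0 ∧ ∀ i, (g : ℤ) * x (i + 1) = x i + l i :=
  stmt6_general g r hg4 hr l x0 hx0
end

section
/- Assume m > g-1 is odd and relatively prime to g. If a coset C of the cyclic subgroup G_{m,g} generated by g in the unit group of Z/mZ has the property that every element x of C (represented in {1,...,m-1}) satisfies x < 2m/g, then C (as a set of integers) is an extreme cycle for the digit set {0,m}. -/
section CosetWalk

variable {G : Type*} [CommGroup G] {u : G}

-- `x₀ * u⁻ⁱ`, with `i` read modulo the order of `u` so that the walk closes up.
noncomputable def cosetWalk (x₀ u : G) (i : ZMod (orderOf u)) : G := x₀ * u ^ (-i).val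

theorem IsOfFinOrder.pow_val_add_one (hu : IsOfFinOrder u) (i : ZMod (orderOf u)) :
    u ^ (i + 1).val = u * u ^ i.val := by
  have : NeZero (orderOf u) := ⟨hu.orderOf_pos.ne'⟩
  rw [← pow_succ', hu.pow_eq_pow_iff_modEq, ← ZMod.natCast_eq_natCast_iff]
  simp only [Nat.cast_succ, ZMod.natCast_zmod_val]

theorem IsOfFinOrder.range_pow_val (hu : IsOfFinOrder u) :
    Set.range (fun i : ZMod (orderOf u) => u ^ i.val) = Subgroup.zpowers u := by
  ext y
  constructor
  · rintro ⟨i, rfl⟩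
    exact Subgroup.npow_mem_zpowers u _
  · intro hy
    obtain ⟨n, rfl⟩ := hu.mem_powers_iff_mem_zpowers.mpr hy
    refine ⟨n, ?_⟩
    simp only [ZMod.val_natCast, pow_mod_orderOf]

theorem IsOfFinOrder.mul_cosetWalk_add_one (hu : IsOfFinOrder u) (x₀ : G)
    (i : ZMod (orderOf u)) : u * cosetWalk x₀ u (i + 1) = cosetWalk x₀ u i := by
  have h := hu.pow_val_add_one (-(i + 1))
  rw [show -(i + 1) + 1 = -i by ring] at h
  rw [cosetWalk, cosetWalk, h, mul_left_comm]

theorem IsOfFinOrder.range_cosetWalk (hu : IsOfFinOrder u) (x₀ : G) :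
    Set.range (cosetWalk x₀ u) = {y | ∃ h ∈ Subgroup.zpowers u, y = x₀ * h} := by
  have hneg : Set.range (fun i : ZMod (orderOf u) => u ^ (-i).val) = Subgroup.zpowers u := by
    rw [← hu.range_pow_val]
    exact neg_surjective.range_comp (fun i : ZMod (orderOf u) => u ^ i.val)
  ext y
  simp only [Set.mem_ofPred_eq, ← SetLike.mem_coe, ← hneg, Set.exists_range_iff]
  exact exists_congr fun _ => eq_comm

end CosetWalk

theorem Int.eq_zero_or_eq_of_dvd_of_lt {m l : ℤ} (h : m ∣ l) (hlo : -m < l) (hhi : l < 2 * m) :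
    l = 0 ∨ l = m := by
  obtain ⟨k, rfl⟩ := h
  have hm : 0 < m := by linarith
  have hk₁ : -1 < k := by nlinarith
  have hk₂ : k < 2 := by nlinarith
  interval_cases k <;> simp

theorem IsCycle.exists_digit_ne_zero {g m r : ℕ} {x l : ZMod r → ℤ} (hc : IsCycle g m r x l)
    (hg : 2 ≤ g) (hx : ∀ i, 0 < x i) : ∃ i, l i ≠ 0 := by
  obtain ⟨hr, -, hstep⟩ := hc
  have : NeZero r := ⟨hr.ne'⟩
  by_contra! hzero
  obtain ⟨j, hj⟩ := Finite.exists_max x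
  have h := hstep (j - 1)
  rw [sub_add_cancel, hzero, add_zero] at h
  have : (2 : ℤ) ≤ g := by exact_mod_cast hg
  nlinarith [hj (j - 1), hx j]

theorem isNontrivialCycle_of_modEq {g m r : ℕ} (hr : 0 < r) (hg : 2 ≤ g) {x : ZMod r → ℤ}
    (hpos : ∀ i, 0 < x i) (hlt : ∀ i, x i < m) (hsmall : ∀ i, g * x i < 2 * m)
    (hmod : ∀ i, g * x (i + 1) ≡ x i [ZMOD m]) :
    IsNontrivialCycle g m r x (fun i => g * x (i + 1) - x i) := by
  have hcycle : IsCycle g m r x (fun i => g * x (i + 1) - x i) := by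
    refine ⟨hr, fun i => Int.eq_zero_or_eq_of_dvd_of_lt (hmod i).symm.dvd ?_ ?_, fun i => by ring⟩
    · have : (0 : ℤ) < g := by omega
      nlinarith [hpos (i + 1), hlt i]
    · linarith [hsmall (i + 1), hpos i]
  exact ⟨hcycle, hcycle.exists_digit_ne_zero hg hpos⟩

theorem ZMod.natCast_mul_val_modEq {m a : ℕ} [NeZero m] {b c : ZMod m}
    (h : (a : ZMod m) * b = c) :
    (a : ℤ) * b.val ≡ c.val [ZMOD m] := by
  rw [← ZMod.intCast_eq_intCast_iff]
  push_cast
  rw [ZMod.natCast_zmod_val, ZMod.natCast_zmod_val, h]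

theorem stmt7_general (g m : ℕ) (hg4 : 4 ≤ g)
    (hmg : g - 1 < m) (hco : Nat.Coprime g m)
    (x0 : (ZMod m)ˣ)
    (C : Set (ZMod m)ˣ)
    (hC : C = {y | ∃ h ∈ Subgroup.zpowers (ZMod.unitOfCoprime g hco), y = x0 * h})
    (hsmall : ∀ y ∈ C, g * ((y : ZMod m).val) < 2 * m) :
    ∃ (r : ℕ) (x l : ZMod r → ℤ), IsNontrivialCycle g m r x l ∧
      Set.range x = (fun y : (ZMod m)ˣ => (((y : ZMod m).val : ℤ))) '' C := by
  have : Fact (1 < m) := ⟨by omega⟩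
  set u := ZMod.unitOfCoprime g hco
  have hu : IsOfFinOrder u := isOfFinOrder_of_finite u
  have hwalk : Set.range (cosetWalk x0 u) = C := by rw [hC, hu.range_cosetWalk]
  set x : ZMod (orderOf u) → ℤ := fun i => (((cosetWalk x0 u i : (ZMod m)ˣ) : ZMod m).val : ℤ)
  refine ⟨orderOf u, x, _, isNontrivialCycle_of_modEq hu.orderOf_pos (by omega) ?_ ?_ ?_ ?_,
    by rw [← hwalk, ← Set.range_comp]; rfl⟩
  · intro i
    simp only [x]
    exact_mod_cast ZMod.val_pos.mpr (Units.ne_zero _)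
  · intro i
    simp only [x]
    exact_mod_cast ZMod.val_lt _
  · intro i
    simp only [x]
    exact_mod_cast hsmall _ (hwalk ▸ Set.mem_range_self i)
  · refine fun i => ZMod.natCast_mul_val_modEq ?_
    rw [← ZMod.coe_unitOfCoprime g hco, ← Units.val_mul, hu.mul_cosetWalk_add_one]

theorem stmt7 (g m : ℕ) (hg4 : 4 ≤ g) (hge : Even g) (hm : Odd m)
    (hmg : g - 1 < m) (hco : Nat.Coprime g m)
    (x0 : (ZMod m)ˣ)
    (C : Set (ZMod m)ˣ)
    (hC : C = {y | ∃ h ∈ Subgroup.zpowers (ZMod.unitOfCoprime g hco), y = x0 * h})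
    (hsmall : ∀ y ∈ C, g * ((y : ZMod m).val) < 2 * m) :
    ∃ (r : ℕ) (x l : ZMod r → ℤ), IsNontrivialCycle g m r x l ∧
      Set.range x = (fun y : (ZMod m)ˣ => (((y : ZMod m).val : ℤ))) '' C :=
  stmt7_general g m hg4 hmg hco x0 C hC hsmall
end

section
/- If m is a primitive number for scale g, then gcd(m,g) = 1. -/
/-!
A common divisor `d > 1` of `m` and `g` divides every digit of a cycle for `{0, m}`, and hence,
reading `x i = g x (i+1) - l i`, every point of it. Dividing the whole cycle by `d` gives a
non-trivial cycle for `{0, m / d}`, so the proper divisor `m / d` of `m` is not complete.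
-/

section Cycle

variable {g m r : ℕ} {x l : ZMod r → ℤ}

lemma IsCycle.dvd_digit (hc : IsCycle g m r x l) {d : ℤ} (hdm : d ∣ m) (i : ZMod r) :
    d ∣ l i := by
  rcases hc.2.1 i with h | h <;> simp [h, hdm]

lemma IsCycle.dvd_point (hc : IsCycle g m r x l) {d : ℤ} (hdg : d ∣ g) (hdm : d ∣ m)
    (i : ZMod r) : d ∣ x i := by
  have hxi : x i = g * x (i + 1) - l i := by linarith [hc.2.2 i]
  rw [hxi]
  exact dvd_sub (dvd_mul_of_dvd_left hdg _) (hc.dvd_digit hdm i)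

lemma IsCycle.div {d k : ℕ} (hc : IsCycle g (d * k) r x l) (hd : 0 < d) (hdg : d ∣ g) :
    IsCycle g k r (fun i => x i / d) (fun i => l i / d) := by
  have hd0 : (d : ℤ) ≠ 0 := by positivity
  have hdg' : (d : ℤ) ∣ g := Int.natCast_dvd_natCast.2 hdg
  have hdm : (d : ℤ) ∣ ((d * k : ℕ) : ℤ) := Int.natCast_dvd_natCast.2 (dvd_mul_right d k)
  refine ⟨hc.1, fun i => ?_, fun i => mul_left_cancel₀ hd0 ?_⟩
  · rcases hc.2.1 i with h | h
    · simp [h]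
    · simp [h, Int.mul_ediv_cancel_left _ hd0]
  · calc (d : ℤ) * (g * (x (i + 1) / d)) = g * ((d : ℤ) * (x (i + 1) / d)) := by ring
      _ = x i + l i := by
        rw [Int.mul_ediv_cancel' (hc.dvd_point hdg' hdm _), hc.2.2 i]
      _ = d * (x i / d + l i / d) := by
        rw [mul_add, Int.mul_ediv_cancel' (hc.dvd_point hdg' hdm i),
          Int.mul_ediv_cancel' (hc.dvd_digit hdm i)]

lemma IsNontrivialCycle.div {d k : ℕ} (hc : IsNontrivialCycle g (d * k) r x l) (hd : 0 < d)
    (hdg : d ∣ g) : IsNontrivialCycle g k r (fun i => x i / d) (fun i => l i / d) := by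
  obtain ⟨hcyc, i, hi⟩ := hc
  refine ⟨hcyc.div hd hdg, i, fun h0 => hi ?_⟩
  simp only at h0
  rw [← Int.mul_ediv_cancel' (hcyc.dvd_digit (d := d) (by push_cast; exact dvd_mul_right _ _) i),
    h0, mul_zero]

end Cycle

lemma Incomplete.pos {g m : ℕ} (h : Incomplete g m) : 0 < m := by
  obtain ⟨r, x, l, ⟨-, hl, -⟩, i, hi⟩ := h
  exact Nat.pos_of_ne_zero fun hm0 => hi (by simpa [hm0] using hl i)

lemma Incomplete.of_mul_left {g d k : ℕ} (h : Incomplete g (d * k)) (hdg : d ∣ g) :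
    Incomplete g k := by
  have hd : 0 < d := Nat.pos_of_mul_pos_right h.pos
  obtain ⟨r, x, l, hc⟩ := h
  exact ⟨r, _, _, hc.div hd hdg⟩

theorem stmt13_general (g m : ℕ)
    (h : Primitive g m) : Nat.Coprime m g := by
  by_contra hcop
  obtain ⟨hinc, hmin⟩ := h
  have hm : 0 < m := hinc.pos
  set d := Nat.gcd m g
  have hdm : d * (m / d) = m := Nat.mul_div_cancel' (Nat.gcd_dvd_left m g)
  have hd : 1 < d := lt_of_le_of_ne (Nat.gcd_pos_of_pos_left g hm) (Ne.symm hcop)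
  have hlt : m / d < m := Nat.div_lt_self hm hd
  refine hmin (m / d) (Dvd.intro_left d hdm) hlt.ne ?_
  exact (hdm ▸ hinc).of_mul_left (Nat.gcd_dvd_right m g)

theorem stmt13 (g m : ℕ) (hg4 : 4 ≤ g) (hge : Even g) (hm : Odd m)
    (h : Primitive g m) : Nat.Coprime m g :=
  stmt13_general g m h
end

section
/- There are infinitely many primitive numbers for any even scale g ≥ 4. -/
/-!
The repunit `R_p = 1 + g + ⋯ + g^(p-1)` is incomplete once `p ≥ g - 1`: the `p`-periodic word of
`g - 1` ones followed by zeros, with digits scaled by `R_p`, carries a cycle, because the number of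
ones is divisible by `g - 1`. So every such `R_p` has a primitive divisor, which is at least `2`
since for `g ≥ 3` the digit set `{0, 1}` has no non-trivial cycle. For distinct primes `p, q`
the repunits `R_p, R_q` are coprime: a common divisor divides `g^gcd(p,q) - 1 = g - 1`, and
`R_n ≡ n [MOD g - 1]`. Hence distinct large primes yield distinct primitive numbers.
-/

open Finset Function

def repunit (g n : ℕ) : ℕ := ∑ i ∈ range n, g ^ i

section Repunit

variable {g : ℕ}

@[simp]
lemma repunit_zero (g : ℕ) : repunit g 0 = 0 := rfl

lemma repunit_pos {n : ℕ} (hn : 0 < n) : 0 < repunit g n :=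
  sum_pos' (fun _ _ => Nat.zero_le _) ⟨0, mem_range.mpr hn, by simp⟩

lemma repunit_succ (g n : ℕ) : repunit g (n + 1) = g * repunit g n + 1 :=
  geom_sum_succ

lemma repunit_dvd_pow_sub_one (hg : 1 ≤ g) (n : ℕ) : repunit g n ∣ g ^ n - 1 :=
  Dvd.intro _ (geom_sum_mul_of_one_le hg n)

lemma repunit_modEq (hg : 1 ≤ g) (n : ℕ) : repunit g n ≡ n [MOD g - 1] := by
  have hg1 : g ≡ 1 [MOD g - 1] := by
    simpa [Nat.sub_add_cancel hg] using Nat.modEq_sub hg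
  simpa [repunit] using Nat.ModEq.sum (s := range n) fun i _ => hg1.pow i

lemma repunit_coprime (hg : 1 ≤ g) {p q : ℕ} (hpq : p.Coprime q) :
    (repunit g p).Coprime (repunit g q) := by
  set d := Nat.gcd (repunit g p) (repunit g q)
  have hd_sub_one : d ∣ g - 1 := by
    have := Nat.dvd_gcd ((Nat.gcd_dvd_left _ _).trans (repunit_dvd_pow_sub_one hg p))
      ((Nat.gcd_dvd_right _ _).trans (repunit_dvd_pow_sub_one hg q))
    rwa [Nat.pow_sub_one_gcd_pow_sub_one, hpq, pow_one] at this
  have hd_len : ∀ n, d ∣ repunit g n → d ∣ n := fun n hn =>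
    (Nat.modEq_zero_iff_dvd.mp (((repunit_modEq hg n).of_dvd hd_sub_one).symm.trans
      (Nat.modEq_zero_iff_dvd.mpr hn)))
  exact Nat.eq_one_of_dvd_coprimes hpq (hd_len p (Nat.gcd_dvd_left _ _))
    (hd_len q (Nat.gcd_dvd_right _ _))

end Repunit

section Cycle

variable {g m r : ℕ} {x l : ZMod r → ℤ}

lemma IsCycle.digit_eq_zero_of_le_one (hg : 3 ≤ g) (hm : m ≤ 1) (h : IsCycle g m r x l)
    (i : ZMod r) : l i = 0 := by
  obtain ⟨hr, hdig, hrec⟩ := h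
  have : NeZero r := ⟨hr.ne'⟩
  have hl_nonneg : ∀ i, 0 ≤ l i := fun i => by rcases hdig i with h | h <;> omega
  have hl_le : ∀ i, l i ≤ 1 := fun i => by rcases hdig i with h | h <;> omega
  -- At a maximum of `x` the recurrence gives `g * x ≤ x + 1`, at a minimum `g * x ≥ x`.
  obtain ⟨imax, himax⟩ := Finite.exists_max x
  obtain ⟨imin, himin⟩ := Finite.exists_min x
  have hg' : (3 : ℤ) ≤ g := by exact_mod_cast hg
  have hmax : x imax ≤ 0 := by
    have := hrec (imax - 1)
    rw [sub_add_cancel] at this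
    nlinarith [himax (imax - 1), hl_le (imax - 1)]
  have hmin : 0 ≤ x imin := by
    have := hrec (imin - 1)
    rw [sub_add_cancel] at this
    nlinarith [himin (imin - 1), hl_nonneg (imin - 1)]
  have hx : ∀ j, x j = 0 := fun j => le_antisymm ((himax j).trans hmax) (hmin.trans (himin j))
  simpa [hx, eq_comm] using hrec i

lemma Incomplete.two_le (hg : 3 ≤ g) (h : Incomplete g m) : 2 ≤ m := by
  obtain ⟨r, x, l, hcyc, i, hi⟩ := h
  by_contra! hm
  exact hi (hcyc.digit_eq_zero_of_le_one hg (by omega) i)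

lemma Incomplete.exists_primitive_dvd (hg : 3 ≤ g) (h : Incomplete g m) :
    ∃ d, d ∣ m ∧ Primitive g d := by
  classical
  have hex : ∃ d, d ∣ m ∧ Incomplete g d := ⟨m, dvd_rfl, h⟩
  obtain ⟨hdm, hd⟩ := Nat.find_spec hex
  refine ⟨Nat.find hex, hdm, hd, fun e he hne hinc => ?_⟩
  have hlt : e < Nat.find hex :=
    lt_of_le_of_ne (Nat.le_of_dvd (by have := hd.two_le hg; omega) he) hne
  exact Nat.find_min hex hlt ⟨he.trans hdm, hinc⟩

end Cycle

lemma Function.Periodic.sum_range_add {M : Type*} [AddCancelCommMonoid M] {f : ℕ → M} {p : ℕ}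
    (hf : Periodic f p) (n : ℕ) : ∑ k ∈ range p, f (n + k) = ∑ k ∈ range p, f k := by
  induction n with
  | zero => simp
  | succ n ih =>
    have h := sum_range_succ' (fun k => f (n + k)) p
    rw [sum_range_succ, add_zero, hf n] at h
    simpa [add_assoc, add_comm 1, ih] using add_right_cancel h.symm

lemma isCycle_of_periodic {g m p : ℕ} (hp : 0 < p) {x l : ℕ → ℤ} (hx : Periodic x p)
    (hdig : ∀ n, l n = 0 ∨ l n = m)
    (hrec : ∀ n, (g : ℤ) * x (n + 1) = x n + l n) :
    IsCycle g m p (fun i => x i.val) (fun i => l i.val) := by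
  have : NeZero p := ⟨hp.ne'⟩
  refine ⟨hp, fun i => hdig _, fun i => ?_⟩
  have hval : (i + 1).val = (i.val + 1) % p := by
    rw [← ZMod.val_natCast, Nat.cast_add, ZMod.natCast_zmod_val, Nat.cast_one]
  simp only [hval, hx.map_mod_nat, hrec]

lemma incomplete_repunit {g p : ℕ} (hg : 2 ≤ g) (hgp : g ≤ p + 1) :
    Incomplete g (repunit g p) := by
  have hp : 0 < p := by omega
  set a : ℕ → ℤ := fun n => if n % p < g - 1 then 1 else 0
  have ha_per : Periodic a p := fun n => by simp [a]
  have hwindow : ∀ n, ∑ k ∈ range p, a (n + k) = g - 1 := by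
    intro n
    have hfilter : (range p).filter (fun k => k % p < g - 1) = range (g - 1) := by
      ext k
      simp only [mem_filter, mem_range]
      constructor
      · rintro ⟨hk, hkg⟩; rwa [Nat.mod_eq_of_lt hk] at hkg
      · intro hk; rw [Nat.mod_eq_of_lt (by omega)]; omega
    rw [ha_per.sum_range_add, sum_boole, hfilter, card_range, Nat.cast_sub (by omega),
      Nat.cast_one]
  -- `x n = (∑ k < p, g^k * a (n + k)) / (g - 1)`, rewritten with `g^k = (g - 1) * R_k + 1`
  -- and the window sum.
  set x : ℕ → ℤ := fun n => 1 + ∑ k ∈ range p, (repunit g k : ℤ) * a (n + k)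
  have hrec : ∀ n, (g : ℤ) * x (n + 1) = x n + repunit g p * a n := by
    intro n
    have hsucc : ∀ k, (g : ℤ) * repunit g k = repunit g (k + 1) - 1 := fun k => by
      rw [repunit_succ]; push_cast; ring
    have h := sum_range_succ' (fun k => (repunit g k : ℤ) * a (n + k)) p
    rw [sum_range_succ, ha_per n] at h
    simp only [x, mul_add, mul_sum, ← mul_assoc, hsucc, sub_mul, sum_sub_distrib, one_mul,
      add_assoc n 1, add_comm 1]
    have hw := hwindow (n + 1)
    simp only [add_assoc n 1, add_comm 1] at hw
    simp only [repunit_zero, Nat.cast_zero, zero_mul, add_zero] at h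
    linarith
  have hx_per : Periodic x p := fun n => by simp only [x, add_right_comm n p, ha_per _]
  refine ⟨p, _, _, isCycle_of_periodic hp hx_per (l := fun n => repunit g p * a n)
    (fun n => ?_) hrec, 0, ?_⟩
  · by_cases h : n % p < g - 1 <;> simp [a, h]
  · simp [a, (repunit_pos hp).ne', show 0 < g - 1 by omega]

theorem stmt14_general (g : ℕ) (hg4 : 4 ≤ g) :
    {m : ℕ | Primitive g m}.Infinite := by
  set P := {p : ℕ | p.Prime ∧ g ≤ p}
  have hP : P.Infinite := (Nat.infinite_setOfPred_prime.sdiff (Set.finite_Iio g)).mono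
    fun p hp => ⟨hp.1, not_lt.mp hp.2⟩
  have hprim : ∀ p ∈ P, ∃ d, d ∣ repunit g p ∧ Primitive g d := fun p hp =>
    (incomplete_repunit (by omega) (by linarith [hp.2])).exists_primitive_dvd (by omega)
  choose! f hf_dvd hf_prim using hprim
  refine Set.infinite_of_injOn_mapsTo (fun p hp q hq hfpq => ?_) hf_prim hP
  by_contra hpq
  have hcop := repunit_coprime (by omega : 1 ≤ g) ((Nat.coprime_primes hp.1 hq.1).mpr hpq)
  have h_one := Nat.eq_one_of_dvd_coprimes hcop (hf_dvd p hp) (hfpq ▸ hf_dvd q hq)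
  have h_two := (hf_prim p hp).1.two_le (by omega)
  omega

theorem stmt14 (g : ℕ) (hg4 : 4 ≤ g) (hge : Even g) :
    {m : ℕ | Primitive g m}.Infinite :=
  stmt14_general g hg4
end

section
/- Let q > g-1 be coprime to g-1 and let m = (g^q - 1)/(g - 1). Then: gcd(g-1, m) = 1; ord_g(m) = q; every divisor e > 1 of m satisfies ord_g(e) ≠ 1 and ord_g(e) divides q; and m is incomplete, having the extreme cycle point x_0 = (1 + g + ... + g^{g-2})/(g-1) with digits m repeated g-1 times followed by q-g+1 zeros. -/
/-!
Since `g ≡ 1 (mod g - 1)`, the repunit `m = 1 + g + ⋯ + g^(q-1)` is `≡ q (mod g - 1)`, which gives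
`gcd(g - 1, m) = gcd(q, g - 1) = 1`; a divisor `e > 1` of `m` then cannot divide `g - 1`.
The order of `g` modulo `m` is `q` because `g^k - 1 < m` for `0 < k < q`.

A cycle `g x_{j+1} = x_j + l_j` with digits of period `r` must be
`x_j = (∑_{k<r} g^k l_{j+k}) / (g^r - 1)`, and conversely this is an integer cycle as soon as
`g^r - 1` divides the period value at one position, since `g` is a unit modulo `g^r - 1`.
For the digits `m, …, m, 0, …, 0` (`g - 1` copies of `m`) the value at `0` is `m (1 + ⋯ + g^(g-2))`,
divisible by `g^q - 1 = (g - 1) m` because `1 + ⋯ + g^(g-2) ≡ g - 1 ≡ 0 (mod g - 1)`.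
-/

open Finset

theorem Nat.geom_sum_modEq_card {n x : ℕ} (hx : x ≡ 1 [MOD n]) (k : ℕ) :
    ∑ i ∈ range k, x ^ i ≡ k [MOD n] := by
  simpa using Nat.ModEq.sum (s := range k) fun i _ => hx.pow i

theorem Nat.geom_sum_modEq_card_sub_one {g : ℕ} (hg : 1 ≤ g) (k : ℕ) :
    ∑ i ∈ range k, g ^ i ≡ k [MOD g - 1] :=
  Nat.geom_sum_modEq_card (Nat.modEq_sub hg) k

theorem Nat.sub_one_dvd_geom_sum_sub_one {g : ℕ} (hg : 1 ≤ g) :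
    g - 1 ∣ ∑ i ∈ range (g - 1), g ^ i :=
  Nat.modEq_zero_iff_dvd.mp
    ((Nat.geom_sum_modEq_card_sub_one hg _).trans (Nat.modEq_zero_iff_dvd.mpr dvd_rfl))

theorem Nat.coprime_sub_one_geom_sum {g q : ℕ} (hg : 1 ≤ g) (hq : Nat.Coprime q (g - 1)) :
    Nat.Coprime (g - 1) (∑ i ∈ range q, g ^ i) :=
  Nat.coprime_comm.mp ((Nat.geom_sum_modEq_card_sub_one hg q).gcd_eq.trans hq)

theorem Nat.pow_lt_geom_sum (g : ℕ) {k q : ℕ} (hk : 0 < k) (hkq : k < q) :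
    g ^ k < ∑ i ∈ range q, g ^ i :=
  calc g ^ k < g ^ 0 + g ^ k := by simp
    _ ≤ ∑ i ∈ range q, g ^ i :=
      add_le_sum (fun _ _ => Nat.zero_le _) (mem_range.mpr (hk.trans hkq)) (mem_range.mpr hkq)
        hk.ne

theorem orderOf_natCast_zmod_geom_sum {g q : ℕ} (hg : 2 ≤ g) (hq : 0 < q) :
    orderOf (g : ZMod (∑ i ∈ range q, g ^ i)) = q := by
  set m := ∑ i ∈ range q, g ^ i
  rw [orderOf_eq_iff hq]
  constructor
  · have hm0 : ((∑ i ∈ range q, g ^ i : ℕ) : ZMod m) = 0 := ZMod.natCast_self m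
    push_cast at hm0
    rw [← sub_eq_zero, ← geom_sum_mul, hm0, zero_mul]
  · intro k hkq hk hgk
    have hlt : g ^ k < m := Nat.pow_lt_geom_sum g hk hkq
    have hmod : g ^ k % m = 1 % m := by
      rw [← ZMod.natCast_eq_natCast_iff']
      exact_mod_cast hgk
    rw [Nat.mod_eq_of_lt hlt, Nat.mod_eq_of_lt ((Nat.one_le_pow _ _ (by omega)).trans_lt hlt)]
      at hmod
    exact (Nat.one_lt_pow hk.ne' (by omega)).ne' hmod

theorem ZMod.natCast_ne_one_of_dvd_of_coprime {g e m : ℕ} (hg : 1 ≤ g)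
    (hcop : Nat.Coprime (g - 1) m) (he : e ∣ m) (he1 : e ≠ 1) : (g : ZMod e) ≠ 1 := by
  intro hg1
  have hdvd : e ∣ g - 1 := by
    rw [← Nat.cast_one, ZMod.natCast_eq_natCast_iff] at hg1
    exact (Nat.modEq_iff_dvd' hg).mp hg1.symm
  exact he1 (Nat.eq_one_of_dvd_coprimes hcop hdvd he)

section PeriodValue

variable {R : Type*} [CommRing R]

def periodValue (g : R) {r : ℕ} (l : ZMod r → R) (j : ZMod r) : R :=
  ∑ k ∈ range r, g ^ k * l (j + k)

theorem mul_periodValue_add_one (g : R) {r : ℕ} (l : ZMod r → R) (j : ZMod r) :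
    g * periodValue g l (j + 1) = periodValue g l j + (g ^ r - 1) * l j := by
  have h := (sum_range_succ (fun k => g ^ k * l (j + k)) r).symm.trans
    (sum_range_succ' (fun k => g ^ k * l (j + k)) r)
  simp only [ZMod.natCast_self, add_zero, Nat.cast_add, Nat.cast_one, pow_zero, one_mul,
    Nat.cast_zero] at h
  rw [periodValue, periodValue, mul_sum, sub_one_mul, ← add_sub_assoc, h]
  simp only [pow_succ, add_comm (1 : ZMod r), add_assoc]
  ring_nf

theorem isCoprime_self_pow_sub_one (g : R) {r : ℕ} (hr : r ≠ 0) : IsCoprime g (g ^ r - 1) :=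
  ⟨g ^ (r - 1), -1, by rw [← pow_succ, Nat.sub_add_cancel (Nat.one_le_iff_ne_zero.mpr hr)]; ring⟩

theorem sub_one_dvd_periodValue {g : R} {r : ℕ} [NeZero r] {l : ZMod r → R}
    (h0 : g ^ r - 1 ∣ periodValue g l 0) (j : ZMod r) : g ^ r - 1 ∣ periodValue g l j := by
  suffices ∀ n : ℕ, g ^ r - 1 ∣ periodValue g l n by simpa using this j.val
  intro n
  induction n with
  | zero => simpa using h0
  | succ n ih =>
    refine (isCoprime_self_pow_sub_one g (NeZero.ne r)).symm.dvd_of_dvd_mul_left ?_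
    rw [Nat.cast_succ, mul_periodValue_add_one]
    exact ih.add (dvd_mul_right _ _)

end PeriodValue

theorem mul_periodValue_div_add_one {g : ℤ} {r : ℕ} [NeZero r] (hg : g ^ r ≠ 1)
    {l : ZMod r → ℤ} (h0 : g ^ r - 1 ∣ periodValue g l 0) (j : ZMod r) :
    g * (periodValue g l (j + 1) / (g ^ r - 1)) = periodValue g l j / (g ^ r - 1) + l j := by
  have hc : g ^ r - 1 ≠ 0 := sub_ne_zero.mpr hg
  obtain ⟨a, ha⟩ := sub_one_dvd_periodValue h0 (j + 1)
  obtain ⟨b, hb⟩ := sub_one_dvd_periodValue h0 j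
  have hrec := mul_periodValue_add_one g l j
  rw [ha, hb] at hrec ⊢
  rw [Int.mul_ediv_cancel_left _ hc, Int.mul_ediv_cancel_left _ hc]
  exact mul_left_cancel₀ hc (by linear_combination hrec)

theorem periodValue_leading_block (g m : ℤ) {n q : ℕ} (hnq : n ≤ q) :
    periodValue g (fun i : ZMod q => if i.val < n then m else 0) 0 = m * ∑ k ∈ range n, g ^ k := by
  obtain ⟨d, rfl⟩ := Nat.exists_eq_add_of_le hnq
  have hval : ∀ k < n + d, ((k : ZMod (n + d))).val = k := fun k hk => by
    rw [ZMod.val_natCast, Nat.mod_eq_of_lt hk]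
  rw [periodValue, sum_range_add, mul_sum]
  have htail : ∀ k ∈ range d, g ^ (n + k) * (if ((0 : ZMod (n + d)) + (n + k : ℕ)).val < n
      then m else 0) = 0 := fun k hk => by
    rw [zero_add, hval _ (by simp at hk; omega), if_neg (by omega), mul_zero]
  rw [sum_eq_zero htail, add_zero]
  refine sum_congr rfl fun k hk => ?_
  have hk : k < n := mem_range.mp hk
  rw [zero_add, hval _ (by omega), if_pos hk, mul_comm]

theorem exists_isNontrivialCycle_leading_block {g q : ℕ} (hg : 2 ≤ g) (hq : g - 1 < q) :
    ∃ x : ZMod q → ℤ,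
      IsNontrivialCycle g (∑ i ∈ range q, g ^ i) q x
        (fun i => if i.val < g - 1 then ((∑ i ∈ range q, g ^ i : ℕ) : ℤ) else 0) ∧
      x 0 = ((∑ i ∈ range (g - 1), g ^ i) / (g - 1) : ℕ) := by
  have : NeZero q := ⟨by omega⟩
  set m := ∑ i ∈ range q, g ^ i with hm
  set S := ∑ i ∈ range (g - 1), g ^ i
  set l : ZMod q → ℤ := fun i => if i.val < g - 1 then (m : ℤ) else 0
  have hm0 : (0 : ℤ) < m := by exact_mod_cast geom_sum_pos (Nat.zero_le g) (by omega)
  have hgq : (g : ℤ) ^ q - 1 = m * ((g : ℤ) - 1) := by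
    rw [← geom_sum_mul, hm]; push_cast; ring
  have hgq1 : (g : ℤ) ^ q ≠ 1 := by
    rw [← sub_ne_zero, hgq]; exact mul_ne_zero hm0.ne' (by omega)
  have hl0 : periodValue (g : ℤ) l 0 = m * S := by
    simp only [l, S, periodValue_leading_block _ _ hq.le]; push_cast; rfl
  have hdvd : (g : ℤ) ^ q - 1 ∣ periodValue (g : ℤ) l 0 := by
    have hS : ((g - 1 : ℕ) : ℤ) ∣ S :=
      Int.natCast_dvd_natCast.mpr (Nat.sub_one_dvd_geom_sum_sub_one (by omega))
    rw [Nat.cast_sub (by omega), Nat.cast_one] at hS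
    rw [hgq, hl0]
    exact mul_dvd_mul_left _ hS
  refine ⟨fun j => periodValue (g : ℤ) l j / ((g : ℤ) ^ q - 1), ⟨⟨by omega, fun i => ?_,
    mul_periodValue_div_add_one hgq1 hdvd⟩, 0, ?_⟩, ?_⟩
  · simp only [l]; split_ifs <;> simp
  · simp only [l, ZMod.val_zero, if_pos (show 0 < g - 1 by omega)]; exact hm0.ne'
  · simp only [hl0, hgq, Int.mul_ediv_mul_of_pos _ _ hm0]
    push_cast [Nat.cast_sub (by omega : 1 ≤ g)]; rfl

theorem stmt19_general (g q : ℕ) (hg4 : 4 ≤ g)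
    (hq : g - 1 < q) (hco : Nat.Coprime q (g - 1))
    (m : ℕ) (hm : m = (g ^ q - 1) / (g - 1)) :
    Nat.Coprime (g - 1) m ∧
      orderOf ((g : ZMod m)) = q ∧
      (∀ e : ℕ, 1 < e → e ∣ m → orderOf ((g : ZMod e)) ≠ 1 ∧ orderOf ((g : ZMod e)) ∣ q) ∧
      ∃ x : ZMod q → ℤ,
        IsNontrivialCycle g m q x (fun i => if i.val < g - 1 then (m : ℤ) else 0) ∧
        x 0 = ((∑ i ∈ Finset.range (g - 1), g ^ i) / (g - 1) : ℕ) := by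
  have hg1 : 1 ≤ g := by omega
  obtain rfl : m = ∑ i ∈ range q, g ^ i := by rw [hm, Nat.geomSum_eq (by omega)]
  have hcop := Nat.coprime_sub_one_geom_sum hg1 hco
  have hord := orderOf_natCast_zmod_geom_sum (g := g) (by omega) (by omega : 0 < q)
  refine ⟨hcop, hord, fun e he1 he => ⟨?_, ?_⟩, exists_isNontrivialCycle_leading_block (by omega) hq⟩
  · exact orderOf_eq_one_iff.not.mpr
      (ZMod.natCast_ne_one_of_dvd_of_coprime hg1 hcop he he1.ne')
  · simpa [hord] using orderOf_map_dvd (ZMod.castHom he (ZMod e)).toMonoidHom (g : ZMod _)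

theorem stmt19 (g q : ℕ) (hg4 : 4 ≤ g) (hge : Even g)
    (hq : g - 1 < q) (hco : Nat.Coprime q (g - 1))
    (m : ℕ) (hm : m = (g ^ q - 1) / (g - 1)) :
    Nat.Coprime (g - 1) m ∧
      orderOf ((g : ZMod m)) = q ∧
      (∀ e : ℕ, 1 < e → e ∣ m → orderOf ((g : ZMod e)) ≠ 1 ∧ orderOf ((g : ZMod e)) ∣ q) ∧
      ∃ x : ZMod q → ℤ,
        IsNontrivialCycle g m q x (fun i => if i.val < g - 1 then (m : ℤ) else 0) ∧
        x 0 = ((∑ i ∈ Finset.range (g - 1), g ^ i) / (g - 1) : ℕ) :=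
  stmt19_general g q hg4 hq hco m hm
end
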